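/- arXiv:1611.09033 — 3 statements merged into one kernel-verified Lean document; each statement's English description precedes it below -/
import Mathlib

section
/- The graph C_3 ∪ C_3 (two disjoint triangles) is not potentially triangulable in the convex complete graph K_6: for every partition of the six vertices of K_6 into two triples, letting F be the six edges of the two triangles on these triples, K_6 − F admits no triangulation. -/
namespace ConvexTri

/-- `x` lies strictly inside the open arc from `a` to `b` (in the positive cyclic direction). -/
def InOpenArc (n : ℕ) (a b x : ZMod n) : Prop :=
  0 < (x - a).val ∧ (x - a).val < (b - a).val

/-- Two chords of the convex `n`-gon cross: the endpoints of one separate the endpoints of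
the other on the cycle, i.e. exactly one endpoint of the second chord lies in each of the two
open arcs determined by the endpoints of the first chord. -/
def Cross (n : ℕ) (e f : Sym2 (ZMod n)) : Prop :=
  ∃ a b c d : ZMod n, e = s(a, b) ∧ f = s(c, d) ∧
    InOpenArc n a b c ∧ InOpenArc n b a d

/-- Boundary edge of the convex `n`-gon. -/
def IsBoundary (n : ℕ) (e : Sym2 (ZMod n)) : Prop :=
  ∃ i : ZMod n, e = s(i, i + 1)

/-- A diagonal: an edge of `K_n` (a pair of distinct vertices) that is not a boundary edge. -/
def IsDiagonal (n : ℕ) (e : Sym2 (ZMod n)) : Prop :=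
  ¬ e.IsDiag ∧ ¬ IsBoundary n e

/-- `K_n - F` admits a triangulation: `F` contains no boundary edge and there is a set of
`n - 3` pairwise non-crossing diagonals disjoint from `F`. -/
def AdmitsTriangulation (n : ℕ) (F : Finset (Sym2 (ZMod n))) : Prop :=
  (∀ e ∈ F, ¬ IsBoundary n e) ∧
  ∃ T : Finset (Sym2 (ZMod n)), T.card = n - 3 ∧
    (∀ e ∈ T, IsDiagonal n e) ∧
    (∀ e ∈ T, ∀ f ∈ T, ¬ Cross n e f) ∧
    (∀ e ∈ T, e ∉ F)

/-- Degree of a vertex in an edge set. -/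
def deg (n : ℕ) (F : Finset (Sym2 (ZMod n))) (v : ZMod n) : ℕ :=
  (F.filter (fun e => v ∈ e)).card

/-- A pendant vertex of `F` is a vertex of degree 1. -/
def Pendant (n : ℕ) (F : Finset (Sym2 (ZMod n))) (v : ZMod n) : Prop :=
  deg n F v = 1

/-- `F` has no isolated vertices. -/
def NoIsolated (n : ℕ) (F : Finset (Sym2 (ZMod n))) : Prop :=
  ∀ v : ZMod n, 0 < deg n F v

/-- A relabeling of the vertices by a rotation and possibly a reflection of the cyclic order. -/
def IsDihedral (n : ℕ) (φ : ZMod n → ZMod n) : Prop :=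
  (∃ c : ZMod n, φ = fun x => c + x) ∨ (∃ c : ZMod n, φ = fun x => c - x)

/-- The explicit shape of the configuration `F_n(*)` (before relabeling). -/
def FStarShape (n : ℕ) (F : Finset (Sym2 (ZMod n))) : Prop :=
  F = (Finset.image (fun i : ℕ => s((0 : ZMod n), (i : ZMod n))) (Finset.Icc 2 (n - 2))) ∪
      {s((1 : ZMod n), (-1 : ZMod n))} ∨
  ∃ k : ℕ, 2 ≤ k ∧ k ≤ n - 4 ∧
    (∀ i : ℕ, i < k → 2 ≤ deg n F (i : ZMod n) ∧
      s((i : ZMod n) - 1, (i : ZMod n) + 1) ∈ F) ∧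
    (∀ i : ℕ, k ≤ i → i ≤ n - 1 → deg n F (i : ZMod n) = 1 ∧
      ∀ w : ZMod n, s((i : ZMod n), w) ∈ F → ¬ Pendant n F w) ∧
    (∀ u v i j : ZMod n, Pendant n F u → Pendant n F v →
      s(u, i) ∈ F → s(v, j) ∈ F → Cross n s(u, i) s(v, j) → i = j + 1 ∨ j = i + 1)

/-- `F` has the configuration `F_n(*)`. -/
def IsFStar (n : ℕ) (F : Finset (Sym2 (ZMod n))) : Prop :=
  (∀ e ∈ F, ¬ e.IsDiag) ∧ NoIsolated n F ∧ F.card = n - 2 ∧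
  ∃ φ : ZMod n → ZMod n, IsDihedral n φ ∧ FStarShape n (F.image (Sym2.map φ))

/-- Relabeling map after deleting the vertex `i`: the remaining `n - 1` vertices in their
induced cyclic order. -/
def delMap (n : ℕ) (i : ZMod n) (x : ZMod n) : ZMod (n - 1) :=
  (((x - i).val - 1 : ℕ) : ZMod (n - 1))

/-- `F` with the vertex `i` deleted, as an edge set on the remaining `n - 1` vertices
in their induced cyclic order. -/
def delete (n : ℕ) (F : Finset (Sym2 (ZMod n))) (i : ZMod n) :
    Finset (Sym2 (ZMod (n - 1))) :=
  (F.filter (fun e => i ∉ e)).image (Sym2.map (delMap n i))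

/-- `F` has the configuration `J_n(*)`. -/
def IsJStar (n : ℕ) (F : Finset (Sym2 (ZMod n))) : Prop :=
  (∀ e ∈ F, ¬ e.IsDiag) ∧ NoIsolated n F ∧ F.card = n - 1 ∧
  (∀ i : ZMod n, s(i - 1, i + 1) ∉ F → deg n F i ≤ 2) ∧
  (∀ i : ZMod n, s(i - 1, i + 1) ∉ F → deg n F i = 2 → IsFStar (n - 1) (delete n F i))

/-- `J_{n,k}`: the set of vertices `v_i` of degree `k` in `F` with `v_{i-1}v_{i+1} ∉ F`. -/
def Jset (n k : ℕ) (F : Finset (Sym2 (ZMod n))) : Set (ZMod n) :=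
  {i | deg n F i = k ∧ s(i - 1, i + 1) ∉ F}

/-- `F` is a configuration `J_n(*)` of Type-1. -/
def IsJStarType1 (n : ℕ) (F : Finset (Sym2 (ZMod n))) : Prop :=
  IsJStar n F ∧ Jset n 2 F = ∅ ∧ ∃ e ∈ F, IsFStar n (F.erase e)

/-- `F` is a configuration `J_n(*)` of Type-2. -/
def IsJStarType2 (n : ℕ) (F : Finset (Sym2 (ZMod n))) : Prop :=
  IsJStar n F ∧ (Jset n 2 F).Nonempty ∧
  ∀ i ∈ Jset n 2 F, ∀ j₁ j₂ t w : ZMod n,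
    s(i, j₁) ∈ F → s(i, j₂) ∈ F → j₁ ≠ j₂ →
    Pendant n F t → s(t, w) ∈ F →
    Cross n s(t, w) s(i, j₁) → Cross n s(t, w) s(i, j₂) →
    j₁ = w + 1 ∨ w = j₁ + 1 ∨ j₂ = w + 1 ∨ w = j₂ + 1

/-- A Hamiltonian cycle of the convex complete graph `K_n`, as an edge set. -/
def IsHamCycle (n : ℕ) (H : Finset (Sym2 (ZMod n))) : Prop :=
  ∃ g : ZMod n ≃ ZMod n,
    H = Finset.image (fun i : ℕ => s(g (i : ZMod n), g ((i : ZMod n) + 1)))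
      (Finset.range n) ∧ H.card = n

/-- A graph `G` is potentially triangulable in `K_n` if its vertices can be placed injectively
on the vertices of `K_n` so that `K_n` minus the image of the edge set of `G` admits a
triangulation. -/
def PotentiallyTriangulable {V : Type*} (G : SimpleGraph V) (n : ℕ) : Prop :=
  ∃ f : V → ZMod n, Function.Injective f ∧
    ∃ F' : Finset (Sym2 (ZMod n)),
      (F' : Set (Sym2 (ZMod n))) = Sym2.map f '' G.edgeSet ∧
      AdmitsTriangulation n F'


private lemma alt3 : ∀ A : Finset (ZMod 6), A.card = 3 →
    (∃ i : ZMod 6, i ∈ A ∧ i + 1 ∈ A) ∨ A = {0, 2, 4} ∨ A = {1, 3, 5} := by decide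

private lemma classify6 : ∀ a b : ZMod 6, a ≠ b →
    (∃ i : ZMod 6, s(a, b) = s(i, i + 1)) ∨ (∃ i : ZMod 6, s(a, b) = s(i, i + 2)) ∨
    s(a, b) ∈ ({s((0 : ZMod 6), 3), s((1 : ZMod 6), 4), s((2 : ZMod 6), 5)} :
      Finset (Sym2 (ZMod 6))) := by decide

private lemma cross0314 : Cross 6 s((0 : ZMod 6), 3) s((1 : ZMod 6), 4) := by
  unfold Cross InOpenArc; decide

private lemma pairmem (u₁ u₂ u₃ a b : ZMod 6) (ha : a = u₁ ∨ a = u₂ ∨ a = u₃)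
    (hb : b = u₁ ∨ b = u₂ ∨ b = u₃) (hab : a ≠ b) :
    s(a, b) = s(u₁, u₂) ∨ s(a, b) = s(u₂, u₃) ∨ s(a, b) = s(u₃, u₁) := by
  rcases ha with rfl | rfl | rfl <;> rcases hb with rfl | rfl | rfl <;>
    simp_all [Sym2.eq_swap]

set_option maxHeartbeats 2000000 in
/-- Two disjoint triangles on the six vertices of the convex `K_6` never leave
a triangulation: `C_3 ∪ C_3` is not potentially triangulable in `K_6`. -/
theorem stmt15 (u₁ u₂ u₃ w₁ w₂ w₃ : ZMod 6)
    (hdist : ([u₁, u₂, u₃, w₁, w₂, w₃] : List (ZMod 6)).Nodup) :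
    ¬ AdmitsTriangulation 6
      {s(u₁, u₂), s(u₂, u₃), s(u₃, u₁), s(w₁, w₂), s(w₂, w₃), s(w₃, w₁)} := by
  rintro ⟨hnb, T, hcard, hdiag, hcross, hTF⟩
  set F : Finset (Sym2 (ZMod 6)) :=
    {s(u₁, u₂), s(u₂, u₃), s(u₃, u₁), s(w₁, w₂), s(w₂, w₃), s(w₃, w₁)} with hFdef
  -- distinctness facts
  have hd := hdist
  simp only [List.nodup_cons, List.mem_cons, List.not_mem_nil, List.mem_singleton,
    not_or, List.nodup_nil, and_true, or_false] at hd
  obtain ⟨⟨h12, h13, h1w1, h1w2, h1w3⟩, ⟨h23, h2w1, h2w2, h2w3⟩, ⟨h3w1, h3w2, h3w3⟩,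
    ⟨hw12, hw13⟩, hw23⟩ := hd
  -- coverage
  have hcover : ∀ i : ZMod 6, i = u₁ ∨ i = u₂ ∨ i = u₃ ∨ i = w₁ ∨ i = w₂ ∨ i = w₃ := by
    have h6 : ([u₁, u₂, u₃, w₁, w₂, w₃] : List (ZMod 6)).toFinset = Finset.univ :=
      Finset.eq_univ_of_card _ (by rw [List.toFinset_card_of_nodup hdist]; rfl)
    intro i
    have hi := Finset.mem_univ i
    rw [← h6] at hi
    simpa using hi
  -- membership in F from same triple
  have hmemA : ∀ a b : ZMod 6, (a = u₁ ∨ a = u₂ ∨ a = u₃) → (b = u₁ ∨ b = u₂ ∨ b = u₃) →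
      a ≠ b → s(a, b) ∈ F := by
    intro a b ha hb hab
    rcases pairmem u₁ u₂ u₃ a b ha hb hab with h | h | h <;> simp [hFdef, h]
  have hmemB : ∀ a b : ZMod 6, (a = w₁ ∨ a = w₂ ∨ a = w₃) → (b = w₁ ∨ b = w₂ ∨ b = w₃) →
      a ≠ b → s(a, b) ∈ F := by
    intro a b ha hb hab
    rcases pairmem w₁ w₂ w₃ a b ha hb hab with h | h | h <;> simp [hFdef, h]
  have hne2 : ∀ j : ZMod 6, j ≠ j + 2 := by decide
  have hne1 : ∀ j : ZMod 6, j ≠ j + 1 := by decide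
  -- the triple {u₁,u₂,u₃} must be {0,2,4} or {1,3,5}
  have hAcard : ({u₁, u₂, u₃} : Finset (ZMod 6)).card = 3 :=
    Finset.card_eq_three.mpr ⟨u₁, u₂, u₃, h12, h13, h23, rfl⟩
  have hA : ({u₁, u₂, u₃} : Finset (ZMod 6)) = {0, 2, 4} ∨
      ({u₁, u₂, u₃} : Finset (ZMod 6)) = {1, 3, 5} := by
    rcases alt3 _ hAcard with ⟨i, hiA, hi1A⟩ | hA | hA
    · simp only [Finset.mem_insert, Finset.mem_singleton] at hiA hi1A
      exact absurd ⟨i, rfl⟩ (hnb _ (hmemA i (i + 1) hiA hi1A (hne1 i)))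
    · exact Or.inl hA
    · exact Or.inr hA
  have hiff : ∀ j : ZMod 6, (j = u₁ ∨ j = u₂ ∨ j = u₃) ↔
      (j + 2 = u₁ ∨ j + 2 = u₂ ∨ j + 2 = u₃) := by
    intro j
    have hmem : ∀ x : ZMod 6, (x = u₁ ∨ x = u₂ ∨ x = u₃) ↔
        x ∈ ({u₁, u₂, u₃} : Finset (ZMod 6)) := by intro x; simp
    rw [hmem, hmem]
    rcases hA with h | h <;> rw [h] <;> revert j <;> decide
  -- all short diagonals are in F
  have hshort : ∀ i : ZMod 6, s(i, i + 2) ∈ F := by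
    intro i
    by_cases hi : i = u₁ ∨ i = u₂ ∨ i = u₃
    · exact hmemA i (i + 2) hi ((hiff i).mp hi) (hne2 i)
    · have hi' : i = w₁ ∨ i = w₂ ∨ i = w₃ := by
        rcases hcover i with h | h | h | h | h | h <;> tauto
      have hi2 : i + 2 = w₁ ∨ i + 2 = w₂ ∨ i + 2 = w₃ := by
        have hi2n : ¬(i + 2 = u₁ ∨ i + 2 = u₂ ∨ i + 2 = u₃) := fun h => hi ((hiff i).mpr h)
        rcases hcover (i + 2) with h | h | h | h | h | h <;> tauto
      exact hmemB i (i + 2) hi' hi2 (hne2 i)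
  -- every edge of T is a long diagonal
  set S : Finset (Sym2 (ZMod 6)) :=
    {s((0 : ZMod 6), 3), s((1 : ZMod 6), 4), s((2 : ZMod 6), 5)} with hSdef
  have hTS : T ⊆ S := by
    intro e he
    induction e using Sym2.ind with
    | _ a b =>
      obtain ⟨hnd, hnbd⟩ := hdiag _ he
      have hab : a ≠ b := by simpa [Sym2.mk_isDiag_iff] using hnd
      rcases classify6 a b hab with ⟨i, hi⟩ | ⟨i, hi⟩ | hS
      · exact absurd ⟨i, hi⟩ hnbd
      · exact absurd (by rw [hi]; exact hshort i) (hTF _ he)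
      · exact hS
  have hTcard : T.card = 3 := hcard
  have hScard : S.card = 3 := by decide
  have hTeq : T = S := Finset.eq_of_subset_of_card_le hTS (by rw [hTcard, hScard])
  have h03 : s((0 : ZMod 6), 3) ∈ T := by rw [hTeq]; simp [hSdef]
  have h14 : s((1 : ZMod 6), 4) ∈ T := by rw [hTeq]; simp [hSdef]
  exact hcross _ h03 _ h14 cross0314

end ConvexTri
end

section
/- The graph C_3 ∪ C_4 (a disjoint union of a triangle and a 4-cycle) is not potentially triangulable in the convex complete graph K_7: for every placement of vertex-disjoint cycles of lengths 3 and 4 on the seven vertices of K_7, letting F be the corresponding seven edges, K_7 − F admits no triangulation. -/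
namespace ConvexTri

/-! ### Auxiliary machinery for `stmt16` -/

instance instArcDec (n : ℕ) (a b x : ZMod n) : Decidable (InOpenArc n a b x) :=
  inferInstanceAs (Decidable (_ ∧ _))
instance instBndDec (e : Sym2 (ZMod 7)) : Decidable (IsBoundary 7 e) :=
  inferInstanceAs (Decidable (∃ i : ZMod 7, e = s(i, i + 1)))
instance instDiagDec (e : Sym2 (ZMod 7)) : Decidable (IsDiagonal 7 e) :=
  inferInstanceAs (Decidable (¬ _ ∧ ¬ _))

/-- The canonical placement of `C₃ ∪ C₄` on the convex `K₇`. -/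
def FA : Finset (Sym2 (ZMod 7)) :=
  {s(0,2), s(2,4), s(4,0), s(1,5), s(5,3), s(3,6), s(6,1)}
/-- The diagonals of `K₇` not in `FA`. -/
def AA : Finset (Sym2 (ZMod 7)) :=
  {s(0,3), s(0,5), s(1,3), s(1,4), s(2,5), s(2,6), s(4,6)}
def BB : Finset (Sym2 (ZMod 7)) :=
  {s(0,3), s(0,5), s(1,3), s(1,4), s(4,6)}

lemma diagMem : ∀ e : Sym2 (ZMod 7), IsDiagonal 7 e → e ∉ FA → e ∈ AA := by decide

lemma noTriFA : ¬ AdmitsTriangulation 7 FA := by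
  rintro ⟨-, T, hc, hd, hnc, hav⟩
  have hsub : ∀ e ∈ T, e ∈ AA := fun e he => diagMem e (hd e he) (hav e he)
  by_cases h25 : s((2:ZMod 7),(5:ZMod 7)) ∈ T
  · have hsub2 : T ⊆ ({s(2,5), s(0,5), s(2,6)} : Finset (Sym2 (ZMod 7))) := by
      intro e he
      have hA := hsub e he
      have hn := hnc _ h25 e he
      simp only [AA, Finset.mem_insert, Finset.mem_singleton] at hA
      rcases hA with rfl|rfl|rfl|rfl|rfl|rfl|rfl
      · exact absurd ⟨2,5,3,0, rfl, by decide, by decide, by decide⟩ hn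
      · decide
      · exact absurd ⟨2,5,3,1, rfl, by decide, by decide, by decide⟩ hn
      · exact absurd ⟨2,5,4,1, rfl, by decide, by decide, by decide⟩ hn
      · decide
      · decide
      · exact absurd ⟨2,5,4,6, rfl, by decide, by decide, by decide⟩ hn
    have hcard := Finset.card_le_card hsub2
    rw [hc] at hcard
    exact absurd hcard (by decide)
  by_cases h26 : s((2:ZMod 7),(6:ZMod 7)) ∈ T
  · have hsub2 : T ⊆ ({s(2,6), s(4,6)} : Finset (Sym2 (ZMod 7))) := by
      intro e he
      have hA := hsub e he
      have hn := hnc _ h26 e he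
      simp only [AA, Finset.mem_insert, Finset.mem_singleton] at hA
      rcases hA with rfl|rfl|rfl|rfl|rfl|rfl|rfl
      · exact absurd ⟨2,6,3,0, rfl, by decide, by decide, by decide⟩ hn
      · exact absurd ⟨2,6,5,0, rfl, by decide, by decide, by decide⟩ hn
      · exact absurd ⟨2,6,3,1, rfl, by decide, by decide, by decide⟩ hn
      · exact absurd ⟨2,6,4,1, rfl, by decide, by decide, by decide⟩ hn
      · exact absurd he h25
      · decide
      · decide
    have hcard := Finset.card_le_card hsub2
    rw [hc] at hcard
    exact absurd hcard (by decide)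
  have hsubB : T ⊆ BB := by
    intro e he
    have hA := hsub e he
    simp only [AA, Finset.mem_insert, Finset.mem_singleton] at hA
    rcases hA with rfl|rfl|rfl|rfl|rfl|rfl|rfl
    · decide
    · decide
    · decide
    · decide
    · exact absurd he h25
    · exact absurd he h26
    · decide
  have h2 : ¬(s((0:ZMod 7),(5:ZMod 7)) ∈ T ∧ s((4:ZMod 7),(6:ZMod 7)) ∈ T) :=
    fun ⟨p, q⟩ => hnc _ p _ q ⟨0,5,4,6, rfl, rfl, by decide, by decide⟩
  by_cases h03 : s((0:ZMod 7),(3:ZMod 7)) ∈ T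
  · have h14 : s((1:ZMod 7),(4:ZMod 7)) ∉ T :=
      fun h => hnc _ h03 _ h ⟨0,3,1,4, rfl, rfl, by decide, by decide⟩
    have hss : T ⊆ BB.erase s(1,4) := fun e he =>
      Finset.mem_erase.mpr ⟨fun h => h14 (h ▸ he), hsubB he⟩
    have hEq : T = BB.erase s(1,4) :=
      Finset.eq_of_subset_of_card_le hss (by rw [hc]; decide)
    exact h2 ⟨hEq ▸ (by decide), hEq ▸ (by decide)⟩
  · have hss : T ⊆ BB.erase s(0,3) := fun e he =>
      Finset.mem_erase.mpr ⟨fun h => h03 (h ▸ he), hsubB he⟩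
    have hEq : T = BB.erase s(0,3) :=
      Finset.eq_of_subset_of_card_le hss (by rw [hc]; decide)
    exact h2 ⟨hEq ▸ (by decide), hEq ▸ (by decide)⟩

lemma rotArc (c : ZMod 7) {a b x : ZMod 7} (h : InOpenArc 7 a b x) :
    InOpenArc 7 (c + a) (c + b) (c + x) := by
  unfold InOpenArc at h ⊢
  rw [show c + x - (c + a) = x - a by ring, show c + b - (c + a) = b - a by ring]
  exact h

lemma rotCross (c : ZMod 7) {e f : Sym2 (ZMod 7)} (h : Cross 7 e f) :
    Cross 7 (Sym2.map (c + ·) e) (Sym2.map (c + ·) f) := by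
  obtain ⟨a, b, x, y, rfl, rfl, h1, h2⟩ := h
  exact ⟨c + a, c + b, c + x, c + y, by simp [Sym2.map_pair_eq],
    by simp [Sym2.map_pair_eq], rotArc c h1, rotArc c h2⟩

lemma mapInv (c : ZMod 7) (e : Sym2 (ZMod 7)) :
    Sym2.map (c + ·) (Sym2.map (-c + ·) e) = e := by
  induction e using Sym2.ind with
  | _ x y => simp [Sym2.map_pair_eq]

lemma mapInj (c : ZMod 7) : Function.Injective (Sym2.map ((-c : ZMod 7) + ·)) := by
  intro e f h
  have := congrArg (Sym2.map (c + ·)) h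
  rwa [mapInv, mapInv] at this

lemma rotBoundary (c : ZMod 7) (e : Sym2 (ZMod 7)) (h : IsBoundary 7 e) :
    IsBoundary 7 (Sym2.map (c + ·) e) := by
  obtain ⟨i, rfl⟩ := h
  exact ⟨c + i, by simp [Sym2.map_pair_eq, add_assoc]⟩

lemma rotDiag (c : ZMod 7) (e : Sym2 (ZMod 7)) (h : (Sym2.map (c + ·) e).IsDiag) :
    e.IsDiag := by
  induction e using Sym2.ind with
  | _ x y =>
    rw [Sym2.map_pair_eq, Sym2.isDiag_iff_proj_eq] at h
    rw [Sym2.isDiag_iff_proj_eq]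
    exact add_left_cancel h

lemma EQ (c : ZMod 7) (F : Finset (Sym2 (ZMod 7)))
    (h : AdmitsTriangulation 7 (F.image (Sym2.map (c + ·)))) :
    AdmitsTriangulation 7 F := by
  obtain ⟨hb, T, hc, hd, hnc, hav⟩ := h
  refine ⟨fun e he hbd => hb _ (Finset.mem_image_of_mem _ he) (rotBoundary c e hbd),
    T.image (Sym2.map (-c + ·)), ?_, ?_, ?_, ?_⟩
  · rw [Finset.card_image_of_injective _ (mapInj c)]; exact hc
  · rintro e' he'
    obtain ⟨e, he, rfl⟩ := Finset.mem_image.mp he'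
    obtain ⟨nd, nb⟩ := hd e he
    refine ⟨fun hdg => nd (rotDiag (-c) e hdg), fun hbd => ?_⟩
    have := rotBoundary c _ hbd
    rw [mapInv] at this
    exact nb this
  · rintro e' he' f' hf' hcr
    obtain ⟨e, he, rfl⟩ := Finset.mem_image.mp he'
    obtain ⟨f, hf, rfl⟩ := Finset.mem_image.mp hf'
    have := rotCross c hcr
    rw [mapInv, mapInv] at this
    exact hnc e he f hf this
  · rintro e' he' heF
    obtain ⟨e, he, rfl⟩ := Finset.mem_image.mp he'
    have hm : Sym2.map (c + ·) (Sym2.map (-c + ·) e) ∈ F.image (Sym2.map (c + ·)) :=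
      Finset.mem_image_of_mem _ heF
    rw [mapInv] at hm
    exact hav e he hm

set_option maxRecDepth 400000 in
set_option maxHeartbeats 4000000 in
set_option synthInstance.maxSize 5000 in
set_option synthInstance.maxHeartbeats 2000000 in
lemma CLS : ∀ u₁ u₂ : ZMod 7, (u₂-u₁ ∉ ({0,1,6} : Finset (ZMod 7))) →
  ∀ u₃, (u₃-u₁ ∉ ({0,1,6} : Finset (ZMod 7)) ∧ u₃-u₂ ∉ ({0,1,6} : Finset (ZMod 7))) →
  ∀ w₁, (w₁ ∉ ({u₁,u₂,u₃} : Finset (ZMod 7))) →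
  ∀ w₂, (w₂ ∉ ({u₁,u₂,u₃,w₁} : Finset (ZMod 7)) ∧ w₂-w₁ ∉ ({1,6} : Finset (ZMod 7))) →
  ∀ w₃, (w₃ ∉ ({u₁,u₂,u₃,w₁,w₂} : Finset (ZMod 7)) ∧ w₃-w₂ ∉ ({1,6} : Finset (ZMod 7))) →
  ∀ w₄, (w₄ ∉ ({u₁,u₂,u₃,w₁,w₂,w₃} : Finset (ZMod 7)) ∧ w₄-w₃ ∉ ({1,6} : Finset (ZMod 7)) ∧ w₁-w₄ ∉ ({1,6} : Finset (ZMod 7))) →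
  ∃ c : ZMod 7,
    ({s(u₁,u₂), s(u₂,u₃), s(u₃,u₁), s(w₁,w₂), s(w₂,w₃), s(w₃,w₄), s(w₄,w₁)} : Finset (Sym2 (ZMod 7)))
      = FA.image (Sym2.map (c + ·)) := by decide

lemma bnd1 {a b : ZMod 7} (h : b - a = 1) : IsBoundary 7 s(a, b) :=
  ⟨a, by rw [show b = a + 1 by rw [← h]; ring]⟩

lemma bnd6 {a b : ZMod 7} (h : b - a = 6) : IsBoundary 7 s(a, b) :=
  ⟨b, by
    have ha : a = b + 1 := by
      have h1 : a - b = 1 := by rw [show (1 : ZMod 7) = -(6 : ZMod 7) by decide, ← h]; ring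
      rw [← h1]; ring
    rw [Sym2.eq_swap, ha]⟩

lemma bsub {a b : ZMod 7} (hb : ¬ IsBoundary 7 s(a, b)) (hne : ¬ a = b) :
    b - a ∉ ({0, 1, 6} : Finset (ZMod 7)) := by
  intro hm
  simp only [Finset.mem_insert, Finset.mem_singleton] at hm
  rcases hm with h | h | h
  · exact hne (sub_eq_zero.mp h).symm
  · exact hb (bnd1 h)
  · exact hb (bnd6 h)

lemma bsubW {a b : ZMod 7} (hb : ¬ IsBoundary 7 s(a, b)) :
    b - a ∉ ({1, 6} : Finset (ZMod 7)) := by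
  intro hm
  simp only [Finset.mem_insert, Finset.mem_singleton] at hm
  rcases hm with h | h
  · exact hb (bnd1 h)
  · exact hb (bnd6 h)

lemma swapBnd {a b : ZMod 7} (hb : ¬ IsBoundary 7 s(a, b)) : ¬ IsBoundary 7 s(b, a) := by
  rw [Sym2.eq_swap]; exact hb


/-- A triangle and a vertex-disjoint 4-cycle on the seven vertices of the
convex `K_7` never leave a triangulation: `C_3 ∪ C_4` is not potentially triangulable
in `K_7`. -/
theorem stmt16 (u₁ u₂ u₃ w₁ w₂ w₃ w₄ : ZMod 7)
    (hdist : ([u₁, u₂, u₃, w₁, w₂, w₃, w₄] : List (ZMod 7)).Nodup) :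
    ¬ AdmitsTriangulation 7
      {s(u₁, u₂), s(u₂, u₃), s(u₃, u₁),
        s(w₁, w₂), s(w₂, w₃), s(w₃, w₄), s(w₄, w₁)} := by
  intro hadm
  have hb := hadm.1
  simp only [List.nodup_cons, List.mem_cons, List.not_mem_nil, or_false, not_or,
    List.nodup_nil, and_true, List.mem_singleton] at hdist
  obtain ⟨⟨d12, d13, e11, e12, e13, e14⟩, ⟨d23, e21, e22, e23, e24⟩,
    ⟨e31, e32, e33, e34⟩, ⟨f12, f13, f14⟩, ⟨f23, f24⟩, f34, -⟩ := hdist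
  have nb1 : ¬ IsBoundary 7 s(u₁, u₂) := hb _ (by simp)
  have nb2 : ¬ IsBoundary 7 s(u₂, u₃) := hb _ (by simp)
  have nb3 : ¬ IsBoundary 7 s(u₃, u₁) := hb _ (by simp)
  have nb4 : ¬ IsBoundary 7 s(w₁, w₂) := hb _ (by simp)
  have nb5 : ¬ IsBoundary 7 s(w₂, w₃) := hb _ (by simp)
  have nb6 : ¬ IsBoundary 7 s(w₃, w₄) := hb _ (by simp)
  have nb7 : ¬ IsBoundary 7 s(w₄, w₁) := hb _ (by simp)
  obtain ⟨c, hF⟩ := CLS u₁ u₂ (bsub nb1 d12) u₃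
    ⟨bsub (swapBnd nb3) d13, bsub nb2 d23⟩ w₁
    (by simp only [Finset.mem_insert, Finset.mem_singleton, not_or]
        exact ⟨fun h => e11 h.symm, fun h => e21 h.symm, fun h => e31 h.symm⟩) w₂
    ⟨by simp only [Finset.mem_insert, Finset.mem_singleton, not_or]
        exact ⟨fun h => e12 h.symm, fun h => e22 h.symm, fun h => e32 h.symm,
          fun h => f12 h.symm⟩, bsubW nb4⟩ w₃
    ⟨by simp only [Finset.mem_insert, Finset.mem_singleton, not_or]
        exact ⟨fun h => e13 h.symm, fun h => e23 h.symm, fun h => e33 h.symm,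
          fun h => f13 h.symm, fun h => f23 h.symm⟩, bsubW nb5⟩ w₄
    ⟨by simp only [Finset.mem_insert, Finset.mem_singleton, not_or]
        exact ⟨fun h => e14 h.symm, fun h => e24 h.symm, fun h => e34 h.symm,
          fun h => f14 h.symm, fun h => f24 h.symm, fun h => f34 h.symm⟩,
      bsubW nb6, bsubW nb7⟩
  rw [hF] at hadm
  exact noTriFA (EQ c FA hadm)


end ConvexTri
end

section
/- Let n ≥ 7 and let F be a disjoint union of k ≥ 1 cycles (each of length at least 3) with exactly n − 3 vertices in total, where n − 3 ≥ 4. Then F is potentially triangulable in the convex complete graph K_n. -/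
namespace ConvexTri

/-!
Triangulate by the fan of all diagonals at `v_0` and keep `v_0` off the graph: then only the
boundary edges must be avoided, i.e. adjacent vertices of `F` must never land on consecutive
vertices of the polygon. Since `F` has maximum degree `2`, a greedy argument splits its vertices
into three paths of the complement of `F` (each new vertex goes in front of a path whose first
vertex is not one of its two neighbours). Placing the three paths on `v_1, …, v_{n-1}`, each after
a free vertex, uses `(n - 3) + 3 = n` vertices.
-/

section Fan

variable {n : ℕ}

lemma natCast_injOn_Iio : Set.InjOn (Nat.cast : ℕ → ZMod n) (Set.Iio n) := by
  intro i hi j hj hij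
  simpa [ZMod.val_cast_of_lt hi, ZMod.val_cast_of_lt hj] using congrArg ZMod.val hij

lemma natCast_ne_zero_of_lt {i : ℕ} (h0 : 0 < i) (hn : i < n) : (i : ZMod n) ≠ 0 := by
  rw [Ne, ZMod.natCast_eq_zero_iff]
  exact fun h => (Nat.le_of_dvd h0 h).not_gt hn

lemma not_cross_of_common_endpoint (v x y : ZMod n) : ¬ Cross n s(v, x) s(v, y) := by
  rintro ⟨a, b, c, d, he, hf, ⟨hca, hcb⟩, ⟨hdb, hda⟩⟩
  rcases Sym2.eq_iff.1 he with ⟨rfl, rfl⟩ | ⟨rfl, rfl⟩ <;>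
    rcases Sym2.eq_iff.1 hf with ⟨rfl, rfl⟩ | ⟨rfl, rfl⟩ <;>
    simp_all

def fan (n : ℕ) : Finset (Sym2 (ZMod n)) :=
  (Finset.Icc 2 (n - 2)).image fun i : ℕ => s(0, (i : ZMod n))

lemma card_fan (n : ℕ) : (fan n).card = n - 3 := by
  rw [fan, Finset.card_image_of_injOn, Nat.card_Icc]
  · omega
  intro i hi j hj hij
  simp only [Finset.coe_Icc, Set.mem_Icc] at hi hj
  exact natCast_injOn_Iio (by simp; omega) (by simp; omega) (Sym2.congr_right.1 hij)

lemma isDiagonal_of_mem_fan {e : Sym2 (ZMod n)} (he : e ∈ fan n) : IsDiagonal n e := by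
  obtain ⟨i, hi, rfl⟩ := Finset.mem_image.1 he
  rw [Finset.mem_Icc] at hi
  refine ⟨fun h => natCast_ne_zero_of_lt (n := n) (i := i) (by omega) (by omega)
    (Sym2.mk_isDiag_iff.1 h).symm, ?_⟩
  rintro ⟨j, hj⟩
  rcases Sym2.eq_iff.1 hj with ⟨rfl, hi1⟩ | ⟨hj1, rfl⟩
  · have := natCast_injOn_Iio (n := n) (x₁ := i) (x₂ := 1) (by simp; omega) (by simp; omega)
      (by simpa using hi1)
    omega
  · exact natCast_ne_zero_of_lt (n := n) (i := i + 1) (by omega) (by omega)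
      (by push_cast; exact hj1.symm)

lemma admitsTriangulation_of_zero_notMem {F : Finset (Sym2 (ZMod n))}
    (hF : ∀ e ∈ F, ¬ IsBoundary n e) (hF₀ : ∀ e ∈ F, (0 : ZMod n) ∉ e) :
    AdmitsTriangulation n F := by
  refine ⟨hF, fan n, card_fan n, fun e => isDiagonal_of_mem_fan, ?_, ?_⟩
  · intro e he f hf
    obtain ⟨i, -, rfl⟩ := Finset.mem_image.1 he
    obtain ⟨j, -, rfl⟩ := Finset.mem_image.1 hf
    exact not_cross_of_common_endpoint _ _ _
  · intro e he heF
    obtain ⟨i, -, rfl⟩ := Finset.mem_image.1 he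
    exact hF₀ _ heF (Sym2.mem_mk_left _ _)

end Fan

section ChainCover

variable {V : Type*} (G : SimpleGraph V)

lemma filterMap_head?_sublist_flatten (Ls : List (List V)) :
    (Ls.filterMap List.head?).Sublist Ls.flatten := by
  induction Ls with
  | nil => exact List.Sublist.slnil
  | cons L Ls ih =>
    cases L with
    | nil => simpa [List.filterMap_cons] using ih
    | cons a L => simpa using ih.trans (List.sublist_append_right L _)

lemma exists_mem_forall_mem_head?_not_adj [G.LocallyFinite] {x : V} {Ls : List (List V)}
    (hLs : Ls.flatten.Nodup) (hx : G.degree x < Ls.length) :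
    ∃ L ∈ Ls, ∀ y ∈ L.head?, ¬ G.Adj x y := by
  classical
  by_contra! h
  set heads := Ls.filterMap List.head?
  have hheads : heads.Nodup := (filterMap_head?_sublist_flatten Ls).nodup hLs
  have hlen : heads.length = Ls.length := by
    refine le_antisymm (List.length_filterMap_le _ _) (not_lt.1 fun hlt => ?_)
    obtain ⟨L, hL, hnone⟩ := List.length_filterMap_lt_length_iff_exists.1 hlt
    obtain ⟨y, hy, -⟩ := h L hL
    simp [hnone] at hy
  have hsub : heads.toFinset ⊆ G.neighborFinset x := by
    intro y hy
    obtain ⟨L, hL, hLy⟩ := List.mem_filterMap.1 (List.mem_toFinset.1 hy)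
    obtain ⟨z, hz, hxz⟩ := h L hL
    rw [Option.mem_def, hLy, Option.some_inj] at hz
    simpa [hz] using hxz
  have := Finset.card_le_card hsub
  rw [List.toFinset_card_of_nodup hheads, hlen, G.card_neighborFinset_eq_degree] at this
  omega

lemma exists_chain_cover [G.LocallyFinite] {d : ℕ} (hdeg : ∀ v, G.degree v ≤ d)
    (S : Finset V) :
    ∃ Ls : List (List V), Ls.length = d + 1 ∧
      (∀ L ∈ Ls, L.IsChain fun a b => ¬ G.Adj a b) ∧ (Ls.flatten : Multiset V) = S.val := by
  classical
  induction S using Finset.induction_on with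
  | empty => exact ⟨List.replicate (d + 1) [], by simp, by simp, by simp⟩
  | insert x S hxS ih =>
    obtain ⟨Ls, hlen, hchain, hS⟩ := ih
    have hnodup : Ls.flatten.Nodup := by rw [← Multiset.coe_nodup, hS]; exact S.nodup
    obtain ⟨L, hL, hxL⟩ :=
      exists_mem_forall_mem_head?_not_adj G (x := x) hnodup (by have := hdeg x; omega)
    refine ⟨(x :: L) :: Ls.erase L, ?_, ?_, ?_⟩
    · rw [List.length_cons, List.length_erase_of_mem hL]
      have := List.length_pos_of_mem hL
      omega
    · intro L' hL'
      rcases List.mem_cons.1 hL' with rfl | hL'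
      · exact List.isChain_cons.2 ⟨hxL, hchain L hL⟩
      · exact hchain L' (List.mem_of_mem_erase hL')
    · calc (((x :: L) :: Ls.erase L).flatten : Multiset V)
          = x ::ₘ ((L :: Ls.erase L).flatten : Multiset V) := rfl
        _ = x ::ₘ (Ls.flatten : Multiset V) := by
          rw [Multiset.coe_eq_coe.2 (List.perm_cons_erase hL).flatten.symm]
        _ = (insert x S).val := by rw [hS, Finset.insert_val_of_notMem hxS]

end ChainCover

section Placement

variable {V : Type*} (G : SimpleGraph V) {n : ℕ}

/-- Position `i` of the layout is the vertex `v_i` of the polygon; `none` leaves it free. -/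
def layout (Ls : List (List V)) : List (Option V) :=
  (Ls.map fun L => none :: L.map some).flatten

lemma length_layout (Ls : List (List V)) :
    (layout Ls).length = Ls.length + Ls.flatten.length := by
  induction Ls with
  | nil => rfl
  | cons L Ls ih =>
    simp only [layout, List.map_cons, List.flatten_cons, List.length_append, List.length_cons,
      List.length_map] at ih ⊢
    omega

lemma some_mem_layout {Ls : List (List V)} {v : V} : some v ∈ layout Ls ↔ v ∈ Ls.flatten := by
  simp [layout]

lemma head?_layout {Ls : List (List V)} (h : Ls ≠ []) : (layout Ls).head? = some none := by
  cases Ls with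
  | nil => exact absurd rfl h
  | cons L Ls => simp [layout]

lemma isChain_layout {Ls : List (List V)} (h : ∀ L ∈ Ls, L.IsChain fun a b => ¬ G.Adj a b) :
    (layout Ls).IsChain fun a b => ∀ u ∈ a, ∀ v ∈ b, ¬ G.Adj u v := by
  rw [layout, List.isChain_flatten (by simp)]
  refine ⟨?_, ?_⟩
  · simp only [List.mem_map]
    rintro _ ⟨L, hL, rfl⟩
    refine List.isChain_cons.2 ⟨by simp, List.isChain_map _ |>.2 ?_⟩
    exact (h L hL).imp fun a b hab u hu v hv => by simp_all
  · exact List.isChain_map _ |>.2 (List.pairwise_of_forall fun _ _ => by simp).isChain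

lemma exists_placement_of_layout {l : List (Option V)} (hlen : l.length ≤ n)
    (hhead : l.head? = some none) (hmem : ∀ v, some v ∈ l)
    (hchain : l.IsChain fun a b => ∀ u ∈ a, ∀ v ∈ b, ¬ G.Adj u v) :
    ∃ f : V → ZMod n, Function.Injective f ∧ (∀ v, f v ≠ 0) ∧
      ∀ u v, G.Adj u v → f u ≠ f v + 1 := by
  classical
  set pos : V → ℕ := fun v => l.idxOf (some v)
  have hpos_lt (v : V) : pos v < l.length := List.idxOf_lt_length_iff.2 (hmem v)
  have hget (v : V) : l[pos v]'(hpos_lt v) = some v := List.getElem_idxOf _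
  have hpos_pos (v : V) : 0 < pos v := by
    refine Nat.pos_of_ne_zero fun h0 => ?_
    obtain ⟨l', rfl⟩ := List.head?_eq_some_iff.1 hhead
    simpa [h0] using hget v
  have hne_zero (v : V) : (pos v : ZMod n) ≠ 0 :=
    natCast_ne_zero_of_lt (hpos_pos v) (lt_of_lt_of_le (hpos_lt v) hlen)
  refine ⟨fun v => (pos v : ZMod n), fun u v huv => ?_, hne_zero, fun u v hadj huv => ?_⟩
  · have := natCast_injOn_Iio (lt_of_lt_of_le (hpos_lt u) hlen)
      (lt_of_lt_of_le (hpos_lt v) hlen) huv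
    exact Option.some_inj.1 ((List.idxOf_inj (hmem u)).1 this)
  · dsimp only at huv
    have hsucc : pos u = pos v + 1 := by
      rcases Nat.lt_or_ge (pos v + 1) n with h | h
      · exact natCast_injOn_Iio (lt_of_lt_of_le (hpos_lt u) hlen) h (by push_cast; exact huv)
      · have hn : pos v + 1 = n := by have := hpos_lt v; omega
        refine absurd ?_ (hne_zero u)
        rw [huv, ← Nat.cast_add_one, hn, ZMod.natCast_self]
    have hv_succ : pos v + 1 < l.length := hsucc ▸ hpos_lt u
    have hget' : l[pos v + 1] = some u := by simp only [← hsucc, hget]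
    have := List.isChain_iff_getElem.1 hchain (pos v) hv_succ
    rw [hget, hget'] at this
    exact this v rfl u rfl hadj.symm

lemma exists_placement_of_degree_le [Fintype V] [G.LocallyFinite] {d : ℕ}
    (hdeg : ∀ v, G.degree v ≤ d) (hcard : Fintype.card V + (d + 1) ≤ n) :
    ∃ f : V → ZMod n, Function.Injective f ∧ (∀ v, f v ≠ 0) ∧
      ∀ u v, G.Adj u v → f u ≠ f v + 1 := by
  obtain ⟨Ls, hlen, hchain, hcover⟩ := exists_chain_cover G hdeg Finset.univ
  have hflat : Ls.flatten.length = Fintype.card V := by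
    simpa using congrArg Multiset.card hcover
  refine exists_placement_of_layout G (l := layout Ls) ?_ (head?_layout ?_) (fun v => ?_)
    (isChain_layout G hchain)
  · rw [length_layout]; omega
  · exact List.ne_nil_of_length_pos (by omega)
  · rw [some_mem_layout, ← Multiset.mem_coe, hcover]
    exact Finset.mem_univ v

end Placement

lemma potentiallyTriangulable_of_placement {V : Type*} [Finite V] {G : SimpleGraph V} {n : ℕ}
    {f : V → ZMod n} (hf : Function.Injective f) (hf₀ : ∀ v, f v ≠ 0)
    (hadj : ∀ u v, G.Adj u v → f u ≠ f v + 1) : PotentiallyTriangulable G n := by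
  have hfin : (Sym2.map f '' G.edgeSet).Finite := G.edgeSet.toFinite.image _
  refine ⟨f, hf, hfin.toFinset, hfin.coe_toFinset, admitsTriangulation_of_zero_notMem ?_ ?_⟩
  · simp only [Set.Finite.mem_toFinset, Set.mem_image]
    rintro _ ⟨e, he, rfl⟩ ⟨i, hi⟩
    induction e using Sym2.ind with
    | _ u v =>
      rcases Sym2.eq_iff.1 (Sym2.map_mk f u v ▸ hi) with ⟨rfl, hv⟩ | ⟨hu, rfl⟩
      · exact hadj v u (G.adj_symm he) hv
      · exact hadj u v he hu
  · simp only [Set.Finite.mem_toFinset, Set.mem_image]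
    rintro _ ⟨e, -, rfl⟩ h₀
    obtain ⟨v, -, hv⟩ := Sym2.mem_map.1 h₀
    exact hf₀ v hv

theorem stmt18_general {V : Type} [Fintype V] (G : SimpleGraph V) [DecidableRel G.Adj] (n : ℕ)
    (hn : 7 ≤ n) (hcard : Fintype.card V = n - 3)
    (hreg : ∀ v : V, G.degree v = 2) :
    PotentiallyTriangulable G n := by
  obtain ⟨f, hf, hf₀, hadj⟩ :=
    exists_placement_of_degree_le G (fun v => (hreg v).le) (by omega : _ + (2 + 1) ≤ n)
  exact potentiallyTriangulable_of_placement hf hf₀ hadj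

/-- A disjoint union of cycles (i.e. a 2-regular graph) with exactly `n - 3`
vertices, where `n ≥ 7` and `n - 3 ≥ 4`, is potentially triangulable in the convex `K_n`. -/
theorem stmt18 {V : Type} [Fintype V] (G : SimpleGraph V) [DecidableRel G.Adj] (n : ℕ)
    (hn : 7 ≤ n) (h4 : 4 ≤ n - 3) (hcard : Fintype.card V = n - 3)
    (hreg : ∀ v : V, G.degree v = 2) :
    PotentiallyTriangulable G n :=
  stmt18_general G n hn hcard hreg

end ConvexTri
end
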